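/- Let 𝒪 be an infinite order ideal in P = K[x_0,…,x_n], fix a labeling of ∂𝒪 ordered increasingly by degree, and let G be a homogeneous ∂𝒪-prebasis. The following are equivalent: (i) G is a homogeneous ∂𝒪-basis (of the ideal (G)); (ii) ⟨𝒯G_d⟩ = (G)_d for every d ≥ 0; (iii) ⟨𝒯G⟩ = (G). -/

import Mathlib

/-!
Every term outside `𝒪` lies in exactly one cone `𝒯_σ·σ` (take the border divisor with the
largest label), and since the labeling is ordered by degree, a cone term `η·σ` has no
factorization `η'·τ` with `τ ∈ 𝒪` and `deg η' ≤ deg η`. Rewriting `η·σ = η·g_σ + η·(σ - g_σ)`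
therefore gives `⟨𝒯G_d⟩ + ⟨𝒪_d⟩ = P_d` by induction on `deg η`, and in a combination of border
reductors the coefficient of the cone term of a reductor with `deg η` maximal survives, so
`⟨𝒯G⟩ ∩ ⟨𝒪⟩ = 0`. As `⟨𝒯G_d⟩ ⊆ (G)_d`, the modular law turns `P_d = (G)_d ⊕ ⟨𝒪_d⟩` into
`⟨𝒯G_d⟩ = (G)_d`. Finally the reductors are homogeneous and `(G)` is a homogeneous ideal, so the
degreewise equalities amount to `⟨𝒯G⟩ = (G)`.
-/

open MvPolynomial

namespace Border

/-- A term of `K[x_0, …, x_n]`, identified with its exponent vector. -/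
abbrev Term (n : ℕ) := Fin (n + 1) →₀ ℕ

variable {n : ℕ}

/-- The (standard) degree of a term. -/
def tdeg (m : Term n) : ℕ := ∑ i, m i

/-- An order ideal: a nonempty set of terms closed under divisors. -/
def IsOrderIdeal (O : Set (Term n)) : Prop :=
  O.Nonempty ∧ ∀ τ ∈ O, ∀ τ' : Term n, τ' ≤ τ → τ' ∈ O

/-- The border `∂𝒪 = (x_0·𝒪 ∪ ⋯ ∪ x_n·𝒪) ∖ 𝒪`. -/
def border (O : Set (Term n)) : Set (Term n) :=
  {σ | σ ∉ O ∧ ∃ r : Fin (n + 1), ∃ τ ∈ O, σ = τ + Finsupp.single r 1}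

/-- Multiplicative set of a border term `σ`, with respect to a labeling `lab` of the border:
`𝒯_σ = {η : σ' ∤ η·σ for every border term σ' with a larger label}`. -/
def mulSet (O : Set (Term n)) (lab : Term n → ℕ) (σ : Term n) : Set (Term n) :=
  {η | ∀ σ' ∈ border O, lab σ < lab σ' → ¬ σ' ≤ η + σ}

/-- The cone `C(σ) = {η·σ : η ∈ 𝒯_σ}`. -/
def cone (O : Set (Term n)) (lab : Term n → ℕ) (σ : Term n) : Set (Term n) :=
  (fun η => η + σ) '' mulSet O lab σ

/-- A labeling of the border which is injective and ordered increasingly by degree. -/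
def DegOrderedLabeling (O : Set (Term n)) (lab : Term n → ℕ) : Prop :=
  Set.InjOn lab (border O) ∧
    ∀ σ ∈ border O, ∀ σ' ∈ border O, lab σ < lab σ' → tdeg σ ≤ tdeg σ'

/-- Iterated border closures: `∂⁰𝒪 := 𝒪`, and the `(k+1)`-st closure adds the border. -/
def borderClosure (O : Set (Term n)) : ℕ → Set (Term n)
  | 0 => O
  | k + 1 => borderClosure O k ∪ border (borderClosure O k)

/-- The index `ind_𝒪(τ)`: the least `k` with `τ ∈ ∂^k𝒪`. -/
noncomputable def ind (O : Set (Term n)) (τ : Term n) : ℕ :=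
  sInf {k | τ ∈ borderClosure O k}

/-- Degree-`d` part of a set of terms. -/
def Od (O : Set (Term n)) (d : ℕ) : Set (Term n) := {τ | τ ∈ O ∧ tdeg τ = d}

variable {K : Type*} [Field K]

/-- The index of a nonzero polynomial: the maximal index of a term of its support. -/
noncomputable def indP (O : Set (Term n)) (f : MvPolynomial (Fin (n + 1)) K) : ℕ :=
  f.support.sup (ind O)

/-- A homogeneous `∂𝒪`-prebasis: a family `g σ = σ - Σ_{τ ∈ 𝒪_{deg σ}} c_{στ} τ`. -/
def IsPrebasis (O : Set (Term n)) (g : Term n → MvPolynomial (Fin (n + 1)) K) : Prop :=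
  ∀ σ ∈ border O, ∀ τ ∈ (monomial σ (1 : K) - g σ).support, τ ∈ O ∧ tdeg τ = tdeg σ

/-- The set of border reductors `𝒯G = {η·g_σ : σ ∈ ∂𝒪, η ∈ 𝒯_σ}`. -/
def reductors (O : Set (Term n)) (lab : Term n → ℕ)
    (g : Term n → MvPolynomial (Fin (n + 1)) K) : Set (MvPolynomial (Fin (n + 1)) K) :=
  {p | ∃ σ ∈ border O, ∃ η ∈ mulSet O lab σ, p = monomial η (1 : K) * g σ}

/-- The degree-`d` border reductors `𝒯G_d = 𝒯G ∩ P_d`. -/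
def reductorsDeg (O : Set (Term n)) (lab : Term n → ℕ)
    (g : Term n → MvPolynomial (Fin (n + 1)) K) (d : ℕ) :
    Set (MvPolynomial (Fin (n + 1)) K) :=
  reductors O lab g ∩ {p | p.IsHomogeneous d}

/-- One step of the border reduction relation `→_G`. -/
def Step (O : Set (Term n)) (lab : Term n → ℕ)
    (g : Term n → MvPolynomial (Fin (n + 1)) K)
    (f h : MvPolynomial (Fin (n + 1)) K) : Prop :=
  ∃ σ ∈ border O, ∃ η ∈ mulSet O lab σ, η + σ ∈ f.support ∧
    h = f - f.coeff (η + σ) • (monomial η (1 : K) * g σ)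

/-- The border reduction relation `→⁺_G` (finitely many, possibly zero, steps). -/
def Reduces (O : Set (Term n)) (lab : Term n → ℕ)
    (g : Term n → MvPolynomial (Fin (n + 1)) K) :
    MvPolynomial (Fin (n + 1)) K → MvPolynomial (Fin (n + 1)) K → Prop :=
  Relation.ReflTransGen (Step O lab g)

/-- The `K`-vector space spanned by a set of terms. -/
noncomputable def spanTerms (K : Type*) [Field K] (S : Set (Term n)) :
    Submodule K (MvPolynomial (Fin (n + 1)) K) :=
  Submodule.span K ((fun τ => monomial τ (1 : K)) '' S)

/-- The ideal `(G)` generated by a `∂𝒪`-prebasis. -/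
noncomputable def idealG (O : Set (Term n)) (g : Term n → MvPolynomial (Fin (n + 1)) K) :
    Ideal (MvPolynomial (Fin (n + 1)) K) :=
  Ideal.span (g '' border O)

/-- The degree-`d` part `I_d` of an ideal, as a `K`-vector subspace. -/
noncomputable def degPart (I : Ideal (MvPolynomial (Fin (n + 1)) K)) (d : ℕ) :
    Submodule K (MvPolynomial (Fin (n + 1)) K) :=
  Submodule.restrictScalars K I ⊓ homogeneousSubmodule (Fin (n + 1)) K d

/-- Homogeneous ideal. -/
def IsHomogeneousIdeal (I : Ideal (MvPolynomial (Fin (n + 1)) K)) : Prop :=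
  ∀ f ∈ I, ∀ d : ℕ, homogeneousComponent d f ∈ I

/-- `G` is a homogeneous `∂𝒪`-basis of `J`: it is a prebasis contained in `J` and for every
`d` one has `P_d = J_d ⊕ ⟨𝒪_d⟩`, i.e. the residue classes of `𝒪_d` are a basis of `P_d/J_d`. -/
def IsBorderBasisOf (O : Set (Term n)) (g : Term n → MvPolynomial (Fin (n + 1)) K)
    (J : Ideal (MvPolynomial (Fin (n + 1)) K)) : Prop :=
  IsPrebasis O g ∧ (∀ σ ∈ border O, g σ ∈ J) ∧
    ∀ d : ℕ, degPart J d ⊔ spanTerms K (Od O d) = homogeneousSubmodule (Fin (n + 1)) K d ∧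
      Disjoint (degPart J d) (spanTerms K (Od O d))

/-- An `m`-lower representation of `f` by `𝒯G`: `f = Σ c_j • η_j·g_{σ_j}` with distinct
pairs `(η_j, σ_j)`, `η_j ∈ 𝒯_{σ_j}` and `ind(η_j σ_j) ≤ m`. -/
def HasLRep (O : Set (Term n)) (lab : Term n → ℕ)
    (g : Term n → MvPolynomial (Fin (n + 1)) K)
    (f : MvPolynomial (Fin (n + 1)) K) (m : ℕ) : Prop :=
  ∃ (s : Finset (Term n × Term n)) (c : Term n × Term n → K),
    (∀ p ∈ s, p.2 ∈ border O ∧ p.1 ∈ mulSet O lab p.2 ∧ ind O (p.1 + p.2) ≤ m) ∧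
    f = ∑ p ∈ s, c p • (monomial p.1 (1 : K) * g p.2)

/-- An `m`-lower representation of `f` by `𝒯G_d`. -/
def HasLRepDeg (O : Set (Term n)) (lab : Term n → ℕ)
    (g : Term n → MvPolynomial (Fin (n + 1)) K)
    (f : MvPolynomial (Fin (n + 1)) K) (m d : ℕ) : Prop :=
  ∃ (s : Finset (Term n × Term n)) (c : Term n × Term n → K),
    (∀ p ∈ s, p.2 ∈ border O ∧ p.1 ∈ mulSet O lab p.2 ∧ ind O (p.1 + p.2) ≤ m ∧
      (monomial p.1 (1 : K) * g p.2).IsHomogeneous d) ∧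
    f = ∑ p ∈ s, c p • (monomial p.1 (1 : K) * g p.2)

/-- The subtype of terms of `𝒪` of degree `d`. -/
abbrev OdSub (O : Set (Term n)) (d : ℕ) : Type _ := {τ : Term n // τ ∈ Od O d}

lemma tdeg_component_lt {d : ℕ} (m : Term n) (h : tdeg m = d) (i : Fin (n + 1)) :
    m i < d + 1 := by
  have : m i ≤ tdeg m :=
    Finset.single_le_sum (f := fun j => m j) (fun j _ => Nat.zero_le _) (Finset.mem_univ i)
  omega

instance (O : Set (Term n)) (d : ℕ) : Finite (OdSub O d) := by
  have hinj : Function.Injective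
      (fun τ : OdSub O d => fun i : Fin (n + 1) =>
        (⟨τ.1 i, tdeg_component_lt τ.1 τ.2.2 i⟩ : Fin (d + 1))) := by
    intro a b hab
    apply Subtype.ext
    apply Finsupp.ext
    intro i
    simpa using congrArg Fin.val (congrFun hab i)
  exact Finite.of_injective _ hinj

noncomputable instance (O : Set (Term n)) (d : ℕ) : Fintype (OdSub O d) :=
  Fintype.ofFinite _

open scoped Classical in
/-- The `r`-th `d`-graded formal multiplication matrix of a prebasis `G`,
with rows indexed by `𝒪_{d+1}` and columns by `𝒪_d`. -/
noncomputable def multMatrix (O : Set (Term n))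
    (g : Term n → MvPolynomial (Fin (n + 1)) K) (r : Fin (n + 1)) (d : ℕ) :
    Matrix (OdSub O (d + 1)) (OdSub O d) K :=
  Matrix.of fun τ' τ =>
    if τ.1 + Finsupp.single r 1 ∈ O then
      (if τ.1 + Finsupp.single r 1 = τ'.1 then 1 else 0)
    else (monomial (τ.1 + Finsupp.single r 1) (1 : K)
            - g (τ.1 + Finsupp.single r 1)).coeff τ'.1

/-- The minimum degree of a border term. -/
noncomputable def minDegBorder (O : Set (Term n)) : ℕ := sInf (tdeg '' border O)

/-- The `d`-th Macaulay transformation `a^{⟨d⟩}`, computed greedily. -/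
noncomputable def macaulay : ℕ → ℕ → ℕ
  | 0, _ => 0
  | d + 1, a =>
    if a = 0 then 0
    else
      Nat.choose (sSup {k | Nat.choose k (d + 1) ≤ a} + 1) (d + 2) +
        macaulay d (a - Nat.choose (sSup {k | Nat.choose k (d + 1) ≤ a}) (d + 1))

/-- An ideal is generated in degrees `≤ m` if it is generated by its homogeneous
elements of degree `≤ m`. -/
def GeneratedInDegLE (I : Ideal (MvPolynomial (Fin (n + 1)) K)) (m : ℕ) : Prop :=
  I = Ideal.span {f | f ∈ I ∧ ∃ d ≤ m, f.IsHomogeneous d}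

section Terms

variable {O : Set (Term n)} {lab : Term n → ℕ}

lemma tdeg_eq_degree (m : Term n) : tdeg m = m.degree := (Finsupp.degree_eq_sum m).symm

lemma tdeg_add (a b : Term n) : tdeg (a + b) = tdeg a + tdeg b := by
  simp only [tdeg_eq_degree, map_add]

lemma tdeg_single_one (r : Fin (n + 1)) : tdeg (Finsupp.single r 1 : Term n) = 1 := by
  rw [tdeg_eq_degree, Finsupp.degree_single]

lemma exists_eq_add_single_of_tdeg_eq_succ {η : Term n} {k : ℕ} (h : tdeg η = k + 1) :
    ∃ r η₁, η = η₁ + Finsupp.single r 1 ∧ tdeg η₁ = k := by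
  obtain ⟨r, hr⟩ : η.support.Nonempty := by
    rw [Finsupp.support_nonempty_iff]
    rintro rfl
    simp [tdeg] at h
  have hle : Finsupp.single r 1 ≤ η :=
    Finsupp.single_le_iff.mpr (Nat.one_le_iff_ne_zero.mpr (Finsupp.mem_support_iff.mp hr))
  refine ⟨r, η - Finsupp.single r 1, (tsub_add_cancel_of_le hle).symm, ?_⟩
  have := tdeg_add (η - Finsupp.single r 1) (Finsupp.single r 1)
  rw [tsub_add_cancel_of_le hle, tdeg_single_one] at this
  omega

lemma IsOrderIdeal.zero_mem (hO : IsOrderIdeal O) : (0 : Term n) ∈ O :=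
  let ⟨τ, hτ⟩ := hO.1
  hO.2 τ hτ 0 zero_le

lemma IsOrderIdeal.add_notMem (hO : IsOrderIdeal O) {σ : Term n} (hσ : σ ∉ O) (η : Term n) :
    η + σ ∉ O :=
  fun h => hσ (hO.2 _ h σ le_add_self)

lemma exists_border_add_eq {η τ : Term n} (hτ : τ ∈ O)
    (hout : η + τ ∉ O) : ∃ σ ∈ border O, ∃ η', η + τ = η' + σ ∧ tdeg η' < tdeg η := by
  induction hk : tdeg η generalizing η τ with
  | zero =>
    have : η = 0 := by simpa [tdeg_eq_degree, Finsupp.degree_eq_zero_iff] using hk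
    subst this
    exact absurd (by simpa using hτ) hout
  | succ k ih =>
    obtain ⟨r, η₁, rfl, hη₁⟩ := exists_eq_add_single_of_tdeg_eq_succ hk
    have hsplit : η₁ + Finsupp.single r 1 + τ = η₁ + (τ + Finsupp.single r 1) := by
      rw [add_assoc, add_comm (Finsupp.single r 1)]
    by_cases hmem : τ + Finsupp.single r 1 ∈ O
    · obtain ⟨σ, hσ, η', heq, hlt⟩ := ih hmem (hsplit ▸ hout) hη₁
      exact ⟨σ, hσ, η', hsplit.trans heq, by omega⟩
    · exact ⟨_, ⟨hmem, r, τ, hτ, rfl⟩, η₁, hsplit, by omega⟩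

lemma DegOrderedLabeling.lab_lt_of_tdeg_lt (hlab : DegOrderedLabeling O lab) {σ σ' : Term n}
    (hσ : σ ∈ border O) (hσ' : σ' ∈ border O) (h : tdeg σ < tdeg σ') : lab σ < lab σ' := by
  rcases lt_trichotomy (lab σ) (lab σ') with hl | hl | hl
  · exact hl
  · exact absurd (hlab.1 hσ hσ' hl ▸ h) (lt_irrefl _)
  · exact absurd (hlab.2 σ' hσ' σ hσ hl) h.not_ge

/-- Otherwise `η'·τ` is divisible by a border term of degree larger than `deg σ`, hence of
larger label. -/
lemma tdeg_lt_of_add_eq_add (hO : IsOrderIdeal O) (hlab : DegOrderedLabeling O lab)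
    {σ η η' τ : Term n} (hσ : σ ∈ border O) (hη : η ∈ mulSet O lab σ) (hτ : τ ∈ O)
    (h : η + σ = η' + τ) : tdeg η < tdeg η' := by
  by_contra! hle
  obtain ⟨σ₂, hσ₂, η₂, h₂, hlt⟩ := exists_border_add_eq hτ (h ▸ hO.add_notMem hσ.1 η)
  have hdeg := congrArg tdeg (h.trans h₂)
  rw [tdeg_add, tdeg_add] at hdeg
  exact hη σ₂ hσ₂ (hlab.lab_lt_of_tdeg_lt hσ hσ₂ (by omega)) ((h.trans h₂).symm ▸ le_add_self)

lemma exists_mem_mulSet_add (hO : IsOrderIdeal O) {t : Term n} (ht : t ∉ O) :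
    ∃ σ ∈ border O, ∃ η ∈ mulSet O lab σ, t = η + σ := by
  classical
  set B := (Finset.Iic t).filter (· ∈ border O)
  have hB : B.Nonempty := by
    obtain ⟨σ, hσ, η, heq, -⟩ := exists_border_add_eq (η := t) hO.zero_mem (by simpa using ht)
    exact ⟨σ, by simp [B, hσ, add_zero t ▸ heq]⟩
  obtain ⟨σ, hσB, hmax⟩ := B.exists_max_image lab hB
  simp only [B, Finset.mem_filter, Finset.mem_Iic] at hσB hmax
  refine ⟨σ, hσB.2, t - σ, fun σ' hσ' hlt hdvd => ?_, (tsub_add_cancel_of_le hσB.1).symm⟩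
  rw [tsub_add_cancel_of_le hσB.1] at hdvd
  exact (hmax σ' ⟨hdvd, hσ'⟩).not_gt hlt

lemma eq_of_add_eq_add_of_mem_mulSet (hlab : DegOrderedLabeling O lab) {σ σ' η η' : Term n}
    (hσ : σ ∈ border O) (hσ' : σ' ∈ border O) (hη : η ∈ mulSet O lab σ)
    (hη' : η' ∈ mulSet O lab σ') (h : η + σ = η' + σ') : σ = σ' ∧ η = η' := by
  obtain rfl : σ = σ' := by
    by_contra hne
    rcases Ne.lt_or_gt (fun e => hne (hlab.1 hσ hσ' e)) with hl | hl
    · exact hη σ' hσ' hl (h ▸ le_add_self)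
    · exact hη' σ hσ hl (h ▸ le_add_self)
  exact ⟨rfl, add_right_cancel h⟩

end Terms

section Reductors

variable {K : Type*} [Field K] {O : Set (Term n)} {lab : Term n → ℕ}
  {g : Term n → MvPolynomial (Fin (n + 1)) K}

lemma spanTerms_eq_restrictSupport (S : Set (Term n)) :
    spanTerms K S = restrictSupport K S :=
  (restrictSupport_eq_span K S).symm

lemma support_monomial_one_mul (η : Term n) (q : MvPolynomial (Fin (n + 1)) K) :
    (monomial η (1 : K) * q).support = q.support.map (addLeftEmbedding η) :=
  AddMonoidAlgebra.support_coeff_single_mul q 1 (by simp) η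

lemma mem_span_monomial_support (p : MvPolynomial (Fin (n + 1)) K) :
    p ∈ spanTerms K ↑p.support := by
  rw [spanTerms_eq_restrictSupport, mem_restrictSupport_iff]

lemma monomial_one_mul_mem {V : Submodule K (MvPolynomial (Fin (n + 1)) K)} {η : Term n}
    {q : MvPolynomial (Fin (n + 1)) K} (hq : ∀ τ ∈ q.support, monomial (η + τ) (1 : K) ∈ V) :
    monomial η (1 : K) * q ∈ V := by
  refine Submodule.span_le.mpr ?_ (mem_span_monomial_support _)
  rintro _ ⟨t, ht, rfl⟩
  rw [Finset.mem_coe, support_monomial_one_mul, Finset.mem_map] at ht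
  obtain ⟨τ, hτ, rfl⟩ := ht
  exact hq τ hτ

lemma IsPrebasis.isHomogeneous (hg : IsPrebasis O g) {σ : Term n} (hσ : σ ∈ border O) :
    (g σ).IsHomogeneous (tdeg σ) := by
  have htail : monomial σ (1 : K) - g σ ∈ homogeneousSubmodule _ K (tdeg σ) := by
    rw [homogeneousSubmodule_eq_finsupp_supported]
    exact fun τ hτ => by simpa [tdeg_eq_degree] using (hg σ hσ τ hτ).2
  simpa using (isHomogeneous_monomial (1 : K) (tdeg_eq_degree σ).symm).sub htail

lemma IsPrebasis.isHomogeneous_reductor (hg : IsPrebasis O g) {σ : Term n}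
    (hσ : σ ∈ border O) (η : Term n) :
    (monomial η (1 : K) * g σ).IsHomogeneous (tdeg (η + σ)) := by
  rw [tdeg_add]
  exact (isHomogeneous_monomial 1 (tdeg_eq_degree η).symm).mul (hg.isHomogeneous hσ)

lemma IsPrebasis.coeff_self (hg : IsPrebasis O g) {σ : Term n} (hσ : σ ∈ border O) :
    coeff σ (g σ) = 1 := by
  have h : coeff σ (monomial σ (1 : K) - g σ) = 0 :=
    notMem_support_iff.mp fun hmem => hσ.1 (hg σ hσ σ hmem).1
  rwa [coeff_sub, coeff_monomial, if_pos rfl, sub_eq_zero, eq_comm] at h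

lemma IsPrebasis.mem_support_reductor (hg : IsPrebasis O g) {σ η t : Term n}
    (hσ : σ ∈ border O) (ht : t ∈ (monomial η (1 : K) * g σ).support) :
    t = η + σ ∨ ∃ τ ∈ O, t = η + τ := by
  rw [support_monomial_one_mul, Finset.mem_map] at ht
  obtain ⟨τ, hτ, rfl⟩ := ht
  by_cases hτσ : τ = σ
  · exact Or.inl (by rw [hτσ]; rfl)
  · refine Or.inr ⟨τ, (hg σ hσ τ ?_).1, rfl⟩
    rw [mem_support_iff, coeff_sub, coeff_monomial, if_neg (Ne.symm hτσ), zero_sub, neg_ne_zero]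
    exact mem_support_iff.mp hτ

lemma monomial_add_mem_span_reductorsDeg_sup (hO : IsOrderIdeal O)
    (hlab : DegOrderedLabeling O lab) (hg : IsPrebasis O g) {d : ℕ} :
    ∀ (k : ℕ) {η τ : Term n}, τ ∈ O → tdeg η ≤ k → tdeg (η + τ) = d →
      monomial (η + τ) (1 : K) ∈
        Submodule.span K (reductorsDeg O lab g d) ⊔ spanTerms K (Od O d) := by
  intro k
  induction k using Nat.strong_induction_on with
  | _ k ih =>
    intro η τ hτ hk hd
    by_cases hmem : η + τ ∈ O
    · exact Submodule.mem_sup_right (Submodule.subset_span ⟨_, ⟨hmem, hd⟩, rfl⟩)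
    obtain ⟨σ, hσ, η₀, hη₀, heq⟩ := exists_mem_mulSet_add (lab := lab) hO hmem
    have hlt : tdeg η₀ < k := (tdeg_lt_of_add_eq_add hO hlab hσ hη₀ hτ heq.symm).trans_le hk
    have hsplit : monomial (η₀ + σ) (1 : K)
        = monomial η₀ 1 * g σ + monomial η₀ 1 * (monomial σ 1 - g σ) := by
      rw [← mul_add, add_sub_cancel, monomial_mul, one_mul]
    rw [heq, hsplit]
    have hred : monomial η₀ (1 : K) * g σ ∈ reductorsDeg O lab g d :=
      ⟨⟨σ, hσ, η₀, hη₀, rfl⟩, by rw [← hd, heq]; exact hg.isHomogeneous_reductor hσ η₀⟩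
    refine Submodule.add_mem _ (Submodule.mem_sup_left (Submodule.subset_span hred)) ?_
    refine monomial_one_mul_mem fun τ' hτ' => ih _ hlt (hg σ hσ τ' hτ').1 le_rfl ?_
    rw [← hd, heq, tdeg_add, tdeg_add, (hg σ hσ τ' hτ').2]

lemma span_reductorsDeg_sup_spanTerms (hO : IsOrderIdeal O)
    (hlab : DegOrderedLabeling O lab) (hg : IsPrebasis O g) (d : ℕ) :
    Submodule.span K (reductorsDeg O lab g d) ⊔ spanTerms K (Od O d)
      = homogeneousSubmodule (Fin (n + 1)) K d := by
  refine le_antisymm (sup_le (Submodule.span_le.mpr fun p hp => hp.2) ?_) ?_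
  · refine Submodule.span_le.mpr ?_
    rintro _ ⟨τ, ⟨-, hτ⟩, rfl⟩
    exact isHomogeneous_monomial 1 (by rw [← tdeg_eq_degree, hτ])
  · rw [homogeneousSubmodule_eq_finsupp_supported]
    change restrictSupport K _ ≤ _
    rw [restrictSupport_eq_span, Submodule.span_le]
    rintro _ ⟨t, ht, rfl⟩
    simpa using monomial_add_mem_span_reductorsDeg_sup hO hlab hg (tdeg t) hO.zero_mem
      le_rfl (by rw [add_zero, tdeg_eq_degree]; exact ht)

lemma coeff_reductor_eq_zero (hO : IsOrderIdeal O) (hlab : DegOrderedLabeling O lab)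
    (hg : IsPrebasis O g) {σ σ' η η' : Term n} (hσ : σ ∈ border O) (hσ' : σ' ∈ border O)
    (hη : η ∈ mulSet O lab σ) (hη' : η' ∈ mulSet O lab σ') (hne : (η', σ') ≠ (η, σ))
    (hle : tdeg η' ≤ tdeg η) : coeff (η + σ) (monomial η' (1 : K) * g σ') = 0 := by
  refine notMem_support_iff.mp fun hmem => ?_
  rcases hg.mem_support_reductor hσ' hmem with h | ⟨τ, hτ, h⟩
  · obtain ⟨rfl, rfl⟩ := eq_of_add_eq_add_of_mem_mulSet hlab hσ hσ' hη hη' h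
    exact hne rfl
  · exact (tdeg_lt_of_add_eq_add hO hlab hσ hη hτ h).not_ge hle

lemma reductors_eq_image :
    reductors O lab g = (fun p : Term n × Term n => monomial p.1 (1 : K) * g p.2) ''
      {p | p.2 ∈ border O ∧ p.1 ∈ mulSet O lab p.2} := by
  ext f
  simp only [reductors, Set.mem_image, Prod.exists]
  grind

lemma reductors_subset_idealG : reductors O lab g ⊆ idealG O g := by
  rintro _ ⟨σ, hσ, η, -, rfl⟩
  exact Ideal.mul_mem_left _ _ (Ideal.subset_span ⟨σ, hσ, rfl⟩)

lemma disjoint_span_reductors_spanTerms (hO : IsOrderIdeal O)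
    (hlab : DegOrderedLabeling O lab) (hg : IsPrebasis O g) :
    Disjoint (Submodule.span K (reductors O lab g)) (spanTerms K O) := by
  rw [Submodule.disjoint_def]
  intro f hf hfO
  rw [reductors_eq_image, Finsupp.mem_span_image_iff_linearCombination] at hf
  obtain ⟨l, hl, rfl⟩ := hf
  by_contra hne
  obtain ⟨a, ha, hmax⟩ := l.support.exists_max_image (fun p => tdeg p.1)
    (Finsupp.support_nonempty_iff.mpr fun h => hne (by simp [h]))
  obtain ⟨hσ, hη⟩ := hl ha
  have hcoeff : coeff (a.1 + a.2) (Finsupp.linearCombination K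
      (fun p : Term n × Term n => monomial p.1 (1 : K) * g p.2) l) = l a := by
    rw [Finsupp.linearCombination_apply, Finsupp.sum, coeff_sum,
      Finset.sum_eq_single_of_mem a ha]
    · rw [coeff_smul, coeff_monomial_mul, hg.coeff_self hσ, smul_eq_mul, mul_one, mul_one]
    · intro b hb hba
      obtain ⟨hσb, hηb⟩ := hl hb
      rw [coeff_smul, coeff_reductor_eq_zero hO hlab hg hσ hσb hη hηb hba (hmax b hb),
        smul_zero]
  have hmem : a.1 + a.2 ∈ (Finsupp.linearCombination K
      (fun p : Term n × Term n => monomial p.1 (1 : K) * g p.2) l).support := by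
    rw [mem_support_iff, hcoeff]
    exact Finsupp.mem_support_iff.mp ha
  rw [spanTerms_eq_restrictSupport, mem_restrictSupport_iff] at hfO
  exact hO.add_notMem hσ.1 a.1 (hfO hmem)

end Reductors

section Graded

variable {ι R : Type*} [CommSemiring R]

lemma homogeneousComponent_mem_span_inter {S : Set (MvPolynomial ι R)}
    (hS : ∀ p ∈ S, ∃ e, p.IsHomogeneous e) {f : MvPolynomial ι R}
    (hf : f ∈ Submodule.span R S) (d : ℕ) :
    homogeneousComponent d f ∈ Submodule.span R (S ∩ {p | p.IsHomogeneous d}) := by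
  induction hf using Submodule.span_induction with
  | mem p hp =>
    obtain ⟨e, he⟩ := hS p hp
    rw [homogeneousComponent_of_mem he]
    split_ifs with hde
    · exact Submodule.subset_span ⟨hp, hde ▸ he⟩
    · exact Submodule.zero_mem _
  | zero => simp
  | add x y _ _ hx hy => simpa using Submodule.add_mem _ hx hy
  | smul c x _ hx => simpa using Submodule.smul_mem _ c hx

lemma span_eq_iff_forall_span_inter_isHomogeneous {S : Set (MvPolynomial ι R)}
    {M : Submodule R (MvPolynomial ι R)} (hS : ∀ p ∈ S, ∃ e, p.IsHomogeneous e)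
    (hM : ∀ f ∈ M, ∀ d, homogeneousComponent d f ∈ M) :
    Submodule.span R S = M ↔
      ∀ d, Submodule.span R (S ∩ {p | p.IsHomogeneous d}) = M ⊓ homogeneousSubmodule ι R d := by
  constructor
  · rintro rfl d
    refine le_antisymm (le_inf (Submodule.span_mono Set.inter_subset_left)
      (Submodule.span_le.mpr fun p hp => hp.2)) fun f ⟨hf, hfd⟩ => ?_
    simpa [homogeneousComponent_eq_self hfd] using homogeneousComponent_mem_span_inter hS hf d
  · intro h
    refine le_antisymm (Submodule.span_le.mpr fun p hp => ?_) fun f hf => ?_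
    · obtain ⟨e, he⟩ := hS p hp
      have hpe : p ∈ Submodule.span R (S ∩ {p | p.IsHomogeneous e}) :=
        Submodule.subset_span ⟨hp, he⟩
      exact (h e ▸ hpe).1
    · rw [← sum_homogeneousComponent f]
      refine Submodule.sum_mem _ fun d _ => ?_
      have hfd : homogeneousComponent d f ∈ M ⊓ homogeneousSubmodule ι R d :=
        ⟨hM f hf d, homogeneousComponent_mem d f⟩
      exact Submodule.span_mono Set.inter_subset_left (h d ▸ hfd)

attribute [local instance] MvPolynomial.gradedAlgebra in
lemma isHomogeneousIdeal_span {K : Type*} [Field K] {S : Set (MvPolynomial (Fin (n + 1)) K)}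
    (hS : ∀ p ∈ S, ∃ e, p.IsHomogeneous e) : IsHomogeneousIdeal (Ideal.span S) :=
  fun _ hf d => homogeneousComponent_mem_of_mem (Ideal.homogeneous_span _ S hS) hf d

end Graded

lemma sup_eq_and_disjoint_iff_eq_of_le {α : Type*} [Lattice α] [OrderBot α]
    [IsModularLattice α] {V I S T : α} (hVI : V ≤ I) (hsup : V ⊔ S = T) (hdisj : Disjoint V S) :
    I ⊔ S = T ∧ Disjoint I S ↔ V = I := by
  constructor
  · rintro ⟨hIS, hdisjI⟩
    refine eq_of_le_of_inf_le_of_sup_le hVI ?_ (hIS.trans hsup.symm).le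
    rw [hdisjI.eq_bot]
    exact bot_le
  · rintro rfl
    exact ⟨hsup, hdisj⟩

theorem char_by_reductors_general (O : Set (Term n)) (hO : IsOrderIdeal O)
    (lab : Term n → ℕ) (hlab : DegOrderedLabeling O lab)
    (g : Term n → MvPolynomial (Fin (n + 1)) K) (hg : IsPrebasis O g) :
    (IsBorderBasisOf O g (idealG O g) ↔
      ∀ d : ℕ, Submodule.span K (reductorsDeg O lab g d) = degPart (idealG O g) d) ∧
    ((∀ d : ℕ, Submodule.span K (reductorsDeg O lab g d) = degPart (idealG O g) d) ↔
      Submodule.span K (reductors O lab g) =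
        Submodule.restrictScalars K (idealG O g)) := by
  have hreductors : ∀ p ∈ reductors O lab g, ∃ e, p.IsHomogeneous e := by
    rintro _ ⟨σ, hσ, η, -, rfl⟩
    exact ⟨_, hg.isHomogeneous_reductor hσ η⟩
  have hgens : ∀ σ ∈ border O, g σ ∈ idealG O g := fun σ hσ => Ideal.subset_span ⟨σ, hσ, rfl⟩
  have hideal : IsHomogeneousIdeal (idealG O g) := isHomogeneousIdeal_span <| by
    rintro _ ⟨σ, hσ, rfl⟩
    exact ⟨_, hg.isHomogeneous hσ⟩
  have hsplit : ∀ d, degPart (idealG O g) d ⊔ spanTerms K (Od O d)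
      = homogeneousSubmodule (Fin (n + 1)) K d ∧
        Disjoint (degPart (idealG O g) d) (spanTerms K (Od O d)) ↔
      Submodule.span K (reductorsDeg O lab g d) = degPart (idealG O g) d := fun d =>
    sup_eq_and_disjoint_iff_eq_of_le
      (Submodule.span_le.mpr fun p hp => ⟨reductors_subset_idealG hp.1, hp.2⟩)
      (span_reductorsDeg_sup_spanTerms hO hlab hg d)
      ((disjoint_span_reductors_spanTerms hO hlab hg).mono
        (Submodule.span_mono Set.inter_subset_left)
        (Submodule.span_mono (Set.image_mono fun _ hτ => hτ.1)))
  exact ⟨⟨fun h d => (hsplit d).mp (h.2.2 d),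
      fun h => ⟨hg, hgens, fun d => (hsplit d).mpr (h d)⟩⟩,
    (span_eq_iff_forall_span_inter_isHomogeneous
      (M := (idealG O g).restrictScalars K) hreductors hideal).symm⟩

/-- **Characterization by border reductors.** For an infinite order ideal with a
degree-ordered labeling: `G` is a homogeneous `∂𝒪`-basis ⟺ `⟨𝒯G_d⟩ = (G)_d` for every `d`
⟺ `⟨𝒯G⟩ = (G)`. -/
theorem char_by_reductors (O : Set (Term n)) (hO : IsOrderIdeal O) (hinf : O.Infinite)
    (lab : Term n → ℕ) (hlab : DegOrderedLabeling O lab)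
    (g : Term n → MvPolynomial (Fin (n + 1)) K) (hg : IsPrebasis O g) :
    (IsBorderBasisOf O g (idealG O g) ↔
      ∀ d : ℕ, Submodule.span K (reductorsDeg O lab g d) = degPart (idealG O g) d) ∧
    ((∀ d : ℕ, Submodule.span K (reductorsDeg O lab g d) = degPart (idealG O g) d) ↔
      Submodule.span K (reductors O lab g) =
        Submodule.restrictScalars K (idealG O g)) :=
  char_by_reductors_general O hO lab hlab g hg

end Border
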